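/- Let 0 < p ≤ 1 and let ψ be a smooth function on ℝ^d supported in B(0,1/2). For any finitely supported family of coefficients (a_k)_{k ∈ Γ}, Γ ⊆ ℤ^d, and any N > d/p, one has ‖∑_{k∈Γ} a_k · (𝓕^{-1}ψ)(· − k)‖_{L^p(ℝ^d)} ≤ C_N · ‖ψ‖_{C^N} · ‖(a_k)‖_{ℓ^p(Γ)}, where ‖ψ‖_{C^N} = ∑_{|γ|≤N} ‖∂^γ ψ‖_{L^∞} and C_N depends only on d, p, N. -/

import Mathlib

open MeasureTheory FourierTransform Metric ENNReal

/-- The point of `ℝ^d` corresponding to a lattice point `k ∈ ℤ^d`. -/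
def latticePt {d : ℕ} (k : Fin d → ℤ) : EuclideanSpace ℝ (Fin d) :=
  WithLp.toLp 2 (fun i => (k i : ℝ))

/-- The `C^N` norm `∑_{n ≤ N} ‖∂^n ψ‖_{L^∞}` of a function. -/
noncomputable def CNnorm {d : ℕ} (N : ℕ) (ψ : EuclideanSpace ℝ (Fin d) → ℂ) : ℝ :=
  ∑ n ∈ Finset.range (N + 1), ⨆ x : EuclideanSpace ℝ (Fin d), ‖iteratedFDeriv ℝ n ψ x‖


open MeasureTheory FourierTransform Metric ENNReal

private lemma ennreal_sum_rpow_le {ι : Type*} (s : Finset ι) (f : ι → ℝ≥0∞) {p : ℝ}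
    (hp0 : 0 < p) (hp1 : p ≤ 1) : (∑ i ∈ s, f i) ^ p ≤ ∑ i ∈ s, f i ^ p := by
  classical
  induction s using Finset.induction with
  | empty => simp [ENNReal.zero_rpow_of_pos hp0]
  | insert _ _ ha ih =>
    rw [Finset.sum_insert ha, Finset.sum_insert ha]
    exact (ENNReal.rpow_add_le_add_rpow _ _ hp0.le hp1).trans (by gcongr)

private lemma CNnorm_nonneg {d : ℕ} (N : ℕ) (ψ : EuclideanSpace ℝ (Fin d) → ℂ) :
    0 ≤ CNnorm N ψ :=
  Finset.sum_nonneg fun n _ => Real.iSup_nonneg fun x => norm_nonneg _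
section Decay
variable {d : ℕ}

private lemma decay_bound (d N : ℕ) : ∃ C : ℝ, 0 < C ∧
    ∀ ψ : EuclideanSpace ℝ (Fin d) → ℂ, ContDiff ℝ (⊤ : ℕ∞) ψ →
      tsupport ψ ⊆ Metric.closedBall 0 (1 / 2) →
      ∀ x : EuclideanSpace ℝ (Fin d), ‖(𝓕⁻ ψ) x‖ * (1 + ‖x‖) ^ N ≤ C * CNnorm N ψ := by
  set V : ℝ := (volume (Metric.closedBall (0 : EuclideanSpace ℝ (Fin d)) (1 / 2))).toReal with hV
  have hV0 : 0 ≤ V := ENNReal.toReal_nonneg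
  refine ⟨2 ^ N * (1 + 2 ^ N) * (V + 1), by positivity, ?_⟩
  intro ψ hsmooth hsupp x
  set M := CNnorm N ψ with hMdef
  have hM0 : 0 ≤ M := CNnorm_nonneg N ψ
  have hcs : HasCompactSupport ψ :=
    (isCompact_closedBall _ _).of_isClosed_subset (isClosed_tsupport ψ) hsupp
  -- basic facts about iterated derivatives
  have cont : ∀ m : ℕ, Continuous (iteratedFDeriv ℝ m ψ) := fun m =>
    hsmooth.continuous_iteratedFDeriv (by exact_mod_cast le_top)
  have cs : ∀ m : ℕ, HasCompactSupport (iteratedFDeriv ℝ m ψ) := fun m =>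
    hcs.iteratedFDeriv m
  have int_iter : ∀ m : ℕ, Integrable (fun v => ‖iteratedFDeriv ℝ m ψ v‖) volume := fun m =>
    ((cont m).norm).integrable_of_hasCompactSupport (cs m).norm
  set S : ℕ → ℝ := fun m => ⨆ v : EuclideanSpace ℝ (Fin d), ‖iteratedFDeriv ℝ m ψ v‖ with hS
  have hSle : ∀ m, ∀ v, ‖iteratedFDeriv ℝ m ψ v‖ ≤ S m := by
    intro m v
    exact le_ciSup ((cont m).norm.bddAbove_range_of_hasCompactSupport (cs m).norm) v
  have hS0 : ∀ m, 0 ≤ S m := fun m => Real.iSup_nonneg fun v => norm_nonneg _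
  -- the integral bound
  have int_bound : ∀ m : ℕ, ∫ v, ‖iteratedFDeriv ℝ m ψ v‖ ≤ V * S m := by
    intro m
    have h1 : ∫ v, ‖iteratedFDeriv ℝ m ψ v‖ =
        ∫ v in Metric.closedBall (0 : EuclideanSpace ℝ (Fin d)) (1 / 2),
          ‖iteratedFDeriv ℝ m ψ v‖ := by
      refine (setIntegral_eq_integral_of_forall_compl_eq_zero fun v hv => ?_).symm
      have : iteratedFDeriv ℝ m ψ v = 0 := by
        by_contra h
        exact hv (hsupp (support_iteratedFDeriv_subset m h))
      simp [this]
    rw [h1]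
    calc ∫ v in Metric.closedBall (0 : EuclideanSpace ℝ (Fin d)) (1 / 2),
          ‖iteratedFDeriv ℝ m ψ v‖
        ≤ ‖∫ v in Metric.closedBall (0 : EuclideanSpace ℝ (Fin d)) (1 / 2),
            ‖iteratedFDeriv ℝ m ψ v‖‖ := le_abs_self _
      _ ≤ S m * V := by
          refine norm_setIntegral_le_of_norm_le_const measure_closedBall_lt_top
            (fun v _ => by simpa using hSle m v)
      _ = V * S m := mul_comm _ _
  -- sum over m ≤ N of ‖∂^m ψ‖_{L¹}
  have hT : ∑ m ∈ Finset.range (N + 1), ∫ v, ‖iteratedFDeriv ℝ m ψ v‖ ≤ V * M := by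
    rw [hMdef, CNnorm, Finset.mul_sum]
    exact Finset.sum_le_sum fun m _ => int_bound m
  -- n = 0 Fourier bound
  have h0 : ∀ w : EuclideanSpace ℝ (Fin d), ‖𝓕 ψ w‖ ≤ V * M := by
    intro w
    calc ‖𝓕 ψ w‖ ≤ ∫ v, ‖ψ v‖ := VectorFourier.norm_fourierIntegral_le_integral_norm _ _ _ ψ w
      _ = ∫ v, ‖iteratedFDeriv ℝ 0 ψ v‖ := by simp
      _ ≤ V * S 0 := int_bound 0
      _ ≤ V * M := by
          apply mul_le_mul_of_nonneg_left _ hV0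
          rw [hMdef, CNnorm]
          exact Finset.single_le_sum (f := fun n => S n) (fun i _ => hS0 i)
            (Finset.mem_range.mpr (Nat.succ_pos N))
  -- n = N Fourier bound
  have hNb : ∀ w : EuclideanSpace ℝ (Fin d), ‖w‖ ^ N * ‖𝓕 ψ w‖ ≤ 2 ^ N * (V * M) := by
    intro w
    have h'f : ∀ (k n : ℕ), (k : ℕ∞) ≤ (0 : ℕ) → (n : ℕ∞) ≤ (⊤ : ℕ∞) →
        Integrable (fun v : EuclideanSpace ℝ (Fin d) =>
          ‖v‖ ^ k * ‖iteratedFDeriv ℝ n ψ v‖) volume := by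
      intro k n hk _
      obtain rfl : k = 0 := Nat.le_zero.mp (by exact_mod_cast hk)
      simpa using int_iter n
    have := Real.pow_mul_norm_iteratedFDeriv_fourier_le (K := ((0 : ℕ) : ℕ∞))
      (N := (⊤ : ℕ∞)) (hsmooth.of_le (by simp)) h'f (k := 0) (n := N) le_rfl le_top w
    simp only [norm_iteratedFDeriv_zero, Nat.cast_zero, mul_zero, zero_add, pow_zero, one_mul,
      Finset.range_one, Finset.singleton_product, Finset.sum_map,
      Function.Embedding.coeFn_mk] at this
    exact this.trans (mul_le_mul_of_nonneg_left hT (by positivity))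
  -- combine
  have key : ∀ w : EuclideanSpace ℝ (Fin d),
      ‖𝓕 ψ w‖ * (1 + ‖w‖) ^ N ≤ 2 ^ N * (1 + 2 ^ N) * (V + 1) * M := by
    intro w
    have hb : (1 + ‖w‖) ^ N ≤ 2 ^ N * (1 + ‖w‖ ^ N) := by
      calc (1 + ‖w‖) ^ N ≤ (2 * max 1 ‖w‖) ^ N := by
            apply pow_le_pow_left₀ (by positivity)
            rcases le_total ‖w‖ 1 with h | h
            · rw [max_eq_left h]; linarith
            · rw [max_eq_right h]; linarith
        _ = 2 ^ N * max 1 ‖w‖ ^ N := by rw [mul_pow]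
        _ ≤ 2 ^ N * (1 + ‖w‖ ^ N) := by
            apply mul_le_mul_of_nonneg_left _ (by positivity)
            rcases le_total ‖w‖ 1 with h | h
            · rw [max_eq_left h, one_pow]
              have : (0:ℝ) ≤ ‖w‖ ^ N := by positivity
              linarith
            · rw [max_eq_right h]
              have : ‖w‖ ^ N ≤ 1 + ‖w‖ ^ N := by linarith
              linarith
    have h1 : ‖𝓕 ψ w‖ * (1 + ‖w‖) ^ N ≤ ‖𝓕 ψ w‖ * (2 ^ N * (1 + ‖w‖ ^ N)) :=
      mul_le_mul_of_nonneg_left hb (norm_nonneg _)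
    have h2 := h0 w
    have h3 := hNb w
    have t2 : (0:ℝ) ≤ (2:ℝ) ^ N := by positivity
    calc ‖𝓕 ψ w‖ * (1 + ‖w‖) ^ N
        ≤ ‖𝓕 ψ w‖ * (2 ^ N * (1 + ‖w‖ ^ N)) := h1
      _ = 2 ^ N * ‖𝓕 ψ w‖ + 2 ^ N * (‖w‖ ^ N * ‖𝓕 ψ w‖) := by ring
      _ ≤ 2 ^ N * (V * M) + 2 ^ N * (2 ^ N * (V * M)) := by gcongr
      _ = 2 ^ N * (1 + 2 ^ N) * (V * M) := by ring
      _ ≤ 2 ^ N * (1 + 2 ^ N) * ((V + 1) * M) := by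
          have hVM : V * M ≤ (V + 1) * M := by nlinarith
          have hpos : (0:ℝ) ≤ 2 ^ N * (1 + 2 ^ N) := by positivity
          exact mul_le_mul_of_nonneg_left hVM hpos
      _ = 2 ^ N * (1 + 2 ^ N) * (V + 1) * M := by ring
  have hx : ‖(𝓕⁻ ψ) x‖ * (1 + ‖x‖) ^ N ≤ 2 ^ N * (1 + 2 ^ N) * (V + 1) * M := by
    rw [Real.fourierInv_eq_fourier_neg]
    simpa [norm_neg] using key (-x)
  linarith [hx]

end Decay

/-- For `0 < p ≤ 1`, a smooth `ψ` supported in `B(0,1/2)`, finitely supported coefficients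
`(a_k)_{k ∈ Γ}` and `N > d/p`, one has
`‖∑_{k∈Γ} a_k (𝓕⁻¹ψ)(· - k)‖_{L^p} ≤ C_N ‖ψ‖_{C^N} ‖(a_k)‖_{ℓ^p(Γ)}`,
with `C_N = C(d,p,N)` independent of `ψ`, `Γ` and the coefficients. -/
theorem lp_synthesis_estimate (d : ℕ) (p : ℝ) (hp0 : 0 < p) (hp1 : p ≤ 1)
    (N : ℕ) (hN : (d : ℝ) / p < N) :
    ∃ C : ℝ, 0 < C ∧
      ∀ (ψ : EuclideanSpace ℝ (Fin d) → ℂ),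
        ContDiff ℝ (⊤ : ℕ∞) ψ →
        tsupport ψ ⊆ Metric.closedBall 0 (1 / 2) →
        ∀ (Γ : Finset (Fin d → ℤ)) (a : (Fin d → ℤ) → ℂ),
          eLpNorm
              (fun x : EuclideanSpace ℝ (Fin d) =>
                ∑ k ∈ Γ, a k * (𝓕⁻ ψ) (x - latticePt k))
              (ENNReal.ofReal p) volume ≤
            ENNReal.ofReal
              (C * CNnorm N ψ * (∑ k ∈ Γ, ‖a k‖ ^ p) ^ (1 / p)) := by
  obtain ⟨C₀, hC₀, hdecay⟩ := decay_bound d N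
  have hdN : (d : ℝ) < N * p := by
    rw [div_lt_iff₀ hp0] at hN
    exact hN
  set r : ℝ := N * p with hr
  have hint : Integrable (fun x : EuclideanSpace ℝ (Fin d) => (1 + ‖x‖) ^ (-r)) volume := by
    apply integrable_one_add_norm
    rwa [finrank_euclideanSpace_fin]
  set J : ℝ := ∫ x : EuclideanSpace ℝ (Fin d), (1 + ‖x‖) ^ (-r) with hJ
  have hJ0 : 0 ≤ J := integral_nonneg fun x => Real.rpow_nonneg (by positivity) _
  refine ⟨C₀ * (J ^ (1 / p) + 1), by positivity, ?_⟩
  intro ψ hsmooth hsupp Γ a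
  set g := 𝓕⁻ ψ with hgdef
  set M := CNnorm N ψ with hMdef
  have hM0 : 0 ≤ M := CNnorm_nonneg N ψ
  have hCM0 : 0 ≤ C₀ * M := mul_nonneg hC₀.le hM0
  -- continuity of g
  have hcs : HasCompactSupport ψ :=
    (isCompact_closedBall _ _).of_isClosed_subset (isClosed_tsupport ψ) hsupp
  have hψint : Integrable ψ volume := hsmooth.continuous.integrable_of_hasCompactSupport hcs
  have hgc : Continuous g := by
    rw [hgdef]
    exact VectorFourier.fourierIntegral_continuous Real.continuous_fourierChar
      (by exact (continuous_inner (𝕜 := ℝ)).neg) hψint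
  -- decay of g
  have hgb : ∀ x : EuclideanSpace ℝ (Fin d), ‖g x‖ ^ p ≤ (C₀ * M) ^ p * (1 + ‖x‖) ^ (-r) := by
    intro x
    have h1 : (0:ℝ) < 1 + ‖x‖ := by positivity
    have h2 : ‖g x‖ ≤ (C₀ * M) * (1 + ‖x‖) ^ (-(N:ℝ)) := by
      rw [Real.rpow_neg h1.le, Real.rpow_natCast, ← div_eq_mul_inv,
        le_div_iff₀ (pow_pos h1 N)]
      exact hdecay ψ hsmooth hsupp x
    calc ‖g x‖ ^ p ≤ ((C₀ * M) * (1 + ‖x‖) ^ (-(N:ℝ))) ^ p :=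
          Real.rpow_le_rpow (norm_nonneg _) h2 hp0.le
      _ = (C₀ * M) ^ p * (1 + ‖x‖) ^ (-r) := by
          rw [Real.mul_rpow hCM0 (Real.rpow_nonneg h1.le _), ← Real.rpow_mul h1.le, hr]
          ring_nf
  -- setup
  set q := ENNReal.ofReal p with hq
  have hq0 : q ≠ 0 := by
    simp only [hq, ne_eq, ENNReal.ofReal_eq_zero, not_le]
    exact hp0
  have hqt : q ≠ ∞ := ENNReal.ofReal_ne_top
  have hqr : q.toReal = p := ENNReal.toReal_ofReal hp0.le
  rw [eLpNorm_eq_lintegral_rpow_enorm_toReal hq0 hqt, hqr]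
  simp only [enorm_eq_nnnorm]
  -- measurability of pieces
  have hgk : ∀ k : Fin d → ℤ, Measurable fun x : EuclideanSpace ℝ (Fin d) =>
      ((‖g (x - latticePt k)‖₊ : ℝ≥0∞)) ^ p := fun k =>
    ((hgc.comp (continuous_id.sub continuous_const)).measurable.nnnorm.coe_nnreal_ennreal).pow_const p
  -- pointwise bound
  have pointwise : ∀ x : EuclideanSpace ℝ (Fin d),
      ((‖∑ k ∈ Γ, a k * g (x - latticePt k)‖₊ : ℝ≥0∞)) ^ p ≤
        ∑ k ∈ Γ, (‖a k‖₊ : ℝ≥0∞) ^ p * (‖g (x - latticePt k)‖₊ : ℝ≥0∞) ^ p := by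
    intro x
    calc ((‖∑ k ∈ Γ, a k * g (x - latticePt k)‖₊ : ℝ≥0∞)) ^ p
        ≤ (∑ k ∈ Γ, (‖a k * g (x - latticePt k)‖₊ : ℝ≥0∞)) ^ p := by
          gcongr
          exact_mod_cast nnnorm_sum_le Γ fun k => a k * g (x - latticePt k)
      _ ≤ ∑ k ∈ Γ, ((‖a k * g (x - latticePt k)‖₊ : ℝ≥0∞)) ^ p :=
          ennreal_sum_rpow_le Γ _ hp0 hp1
      _ = ∑ k ∈ Γ, (‖a k‖₊ : ℝ≥0∞) ^ p * (‖g (x - latticePt k)‖₊ : ℝ≥0∞) ^ p := by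
          refine Finset.sum_congr rfl fun k _ => ?_
          rw [nnnorm_mul, ENNReal.coe_mul, ENNReal.mul_rpow_of_nonneg _ _ hp0.le]
  -- the single-bump integral
  set I : ℝ≥0∞ := ∫⁻ x : EuclideanSpace ℝ (Fin d), (‖g x‖₊ : ℝ≥0∞) ^ p with hI
  have hIb : I ≤ ENNReal.ofReal ((C₀ * M) ^ p * J) := by
    rw [hI]
    have : ∀ x : EuclideanSpace ℝ (Fin d), (‖g x‖₊ : ℝ≥0∞) ^ p =
        ENNReal.ofReal (‖g x‖ ^ p) := by
      intro x
      rw [← enorm_eq_nnnorm, ← ofReal_norm_eq_enorm, ENNReal.ofReal_rpow_of_nonneg (norm_nonneg _) hp0.le]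
    calc ∫⁻ x, (‖g x‖₊ : ℝ≥0∞) ^ p
        ≤ ∫⁻ x, ENNReal.ofReal ((C₀ * M) ^ p * (1 + ‖x‖) ^ (-r)) := by
          refine lintegral_mono fun x => ?_
          rw [this x]
          exact ENNReal.ofReal_le_ofReal (hgb x)
      _ = ENNReal.ofReal (∫ x : EuclideanSpace ℝ (Fin d),
            (C₀ * M) ^ p * (1 + ‖x‖) ^ (-r)) := by
          rw [← ofReal_integral_eq_lintegral_ofReal (hint.const_mul _)]
          exact Filter.Eventually.of_forall fun x =>
            mul_nonneg (Real.rpow_nonneg hCM0 p) (Real.rpow_nonneg (by positivity) _)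
      _ = ENNReal.ofReal ((C₀ * M) ^ p * J) := by rw [integral_const_mul]
  -- main computation
  have main : (∫⁻ x, (‖∑ k ∈ Γ, a k * g (x - latticePt k)‖₊ : ℝ≥0∞) ^ p) ≤
      (∑ k ∈ Γ, (‖a k‖₊ : ℝ≥0∞) ^ p) * ENNReal.ofReal ((C₀ * M) ^ p * J) := by
    calc (∫⁻ x, (‖∑ k ∈ Γ, a k * g (x - latticePt k)‖₊ : ℝ≥0∞) ^ p)
        ≤ ∫⁻ x, ∑ k ∈ Γ, (‖a k‖₊ : ℝ≥0∞) ^ p * (‖g (x - latticePt k)‖₊ : ℝ≥0∞) ^ p :=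
          lintegral_mono pointwise
      _ = ∑ k ∈ Γ, ∫⁻ x, (‖a k‖₊ : ℝ≥0∞) ^ p * (‖g (x - latticePt k)‖₊ : ℝ≥0∞) ^ p :=
          lintegral_finset_sum Γ fun k _ => (hgk k).const_mul _
      _ = ∑ k ∈ Γ, (‖a k‖₊ : ℝ≥0∞) ^ p * ∫⁻ x, (‖g (x - latticePt k)‖₊ : ℝ≥0∞) ^ p := by
          refine Finset.sum_congr rfl fun k _ => ?_
          rw [lintegral_const_mul _ (hgk k)]
      _ = ∑ k ∈ Γ, (‖a k‖₊ : ℝ≥0∞) ^ p * I := by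
          refine Finset.sum_congr rfl fun k _ => ?_
          congr 1
          exact (measurePreserving_sub_right volume (latticePt k)).lintegral_comp
            ((hgc.measurable.nnnorm.coe_nnreal_ennreal).pow_const p)
      _ ≤ ∑ k ∈ Γ, (‖a k‖₊ : ℝ≥0∞) ^ p * ENNReal.ofReal ((C₀ * M) ^ p * J) := by
          gcongr

      _ = (∑ k ∈ Γ, (‖a k‖₊ : ℝ≥0∞) ^ p) * ENNReal.ofReal ((C₀ * M) ^ p * J) :=
          (Finset.sum_mul _ _ _).symm
  -- conclude
  have hfinal := ENNReal.rpow_le_rpow main (by positivity : (0:ℝ) ≤ 1 / p)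
  refine hfinal.trans ?_
  rw [ENNReal.mul_rpow_of_nonneg _ _ (by positivity : (0:ℝ) ≤ 1 / p)]
  have hS : (∑ k ∈ Γ, (‖a k‖₊ : ℝ≥0∞) ^ p) ^ (1 / p) =
      ENNReal.ofReal ((∑ k ∈ Γ, ‖a k‖ ^ p) ^ (1 / p)) := by
    have h1 : (∑ k ∈ Γ, (‖a k‖₊ : ℝ≥0∞) ^ p) = ENNReal.ofReal (∑ k ∈ Γ, ‖a k‖ ^ p) := by
      rw [ENNReal.ofReal_sum_of_nonneg fun k _ => Real.rpow_nonneg (norm_nonneg _) p]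
      refine Finset.sum_congr rfl fun k _ => ?_
      rw [← enorm_eq_nnnorm, ← ofReal_norm_eq_enorm, ENNReal.ofReal_rpow_of_nonneg (norm_nonneg _) hp0.le]
    rw [h1, ENNReal.ofReal_rpow_of_nonneg
      (Finset.sum_nonneg fun k _ => Real.rpow_nonneg (norm_nonneg _) p) (by positivity)]
  have hK : (ENNReal.ofReal ((C₀ * M) ^ p * J)) ^ (1 / p) =
      ENNReal.ofReal (C₀ * M * J ^ (1 / p)) := by
    rw [ENNReal.ofReal_rpow_of_nonneg (mul_nonneg (Real.rpow_nonneg hCM0 p) hJ0)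
      (by positivity)]
    congr 1
    rw [Real.mul_rpow (Real.rpow_nonneg hCM0 p) hJ0, ← Real.rpow_mul hCM0,
      mul_one_div_cancel hp0.ne', Real.rpow_one]
  rw [hS, hK, ← ENNReal.ofReal_mul (Real.rpow_nonneg
    (Finset.sum_nonneg fun k _ => Real.rpow_nonneg (norm_nonneg _) p) _)]
  apply ENNReal.ofReal_le_ofReal
  have hA0 : 0 ≤ (∑ k ∈ Γ, ‖a k‖ ^ p) ^ (1 / p) :=
    Real.rpow_nonneg (Finset.sum_nonneg fun k _ => Real.rpow_nonneg (norm_nonneg _) p) _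
  have hJp : 0 ≤ J ^ (1 / p) := Real.rpow_nonneg hJ0 _
  nlinarith
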